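/- Let q ≥ 2 be a natural number, let α < β be real numbers, and set S = [α, β]. Let u, v, U, V : ℝ → ℝ be functions such that U and V are (q−1)-times continuously differentiable on S and, for every t ∈ S, the (q−1)-th iterated derivative (within S) of U at t equals u(t) and the (q−1)-th iterated derivative (within S) of V at t equals v(t). Assume u and v satisfy the Chebyshev property on S: for all reals a, b with (a, b) ≠ (0, 0), the function t ↦ a·u(t) + b·v(t) has at most one zero in S. Let a, b be reals and P a real polynomial with natDegree P ≤ q−2, and define f(t) = a·U(t) + b·V(t) + P(t). If for every k ≤ q−1 the k-th iterated derivative (within S) of f vanishes both at α and at β, then a = 0, b = 0, and P = 0 (so f is identically zero on S). -/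

import Mathlib

/-!
The `(q-1)`-th derivative kills `P` and turns `f = a·U + b·V + P` into `a·u + b·v`. Since it
vanishes at both `α ≠ β`, the Chebyshev property forces `a = b = 0`. Then `f = P`, and a
polynomial of degree `≤ q-2` whose derivatives of order `≤ q-1` vanish at `α` has a zero
Taylor expansion at `α`.
-/

open Set Polynomial

namespace Polynomial

variable {𝕜 : Type*} [NontriviallyNormedField 𝕜]

theorem contDiff_eval (P : 𝕜[X]) (n : WithTop ℕ∞) : ContDiff 𝕜 n fun x => P.eval x := by
  simpa using P.contDiff_aeval (𝕜 := 𝕜) n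

theorem iteratedDeriv_eval (P : 𝕜[X]) (n : ℕ) :
    iteratedDeriv n (fun x => P.eval x) = fun x => (derivative^[n] P).eval x := by
  induction n generalizing P with
  | zero => rfl
  | succ n ih =>
    have hderiv : _root_.deriv (fun x => P.eval x) = fun x => P.derivative.eval x := by
      funext x; exact P.deriv
    rw [iteratedDeriv_succ', hderiv, ih, Function.iterate_succ_apply]

theorem iteratedDerivWithin_eval {s : Set 𝕜} (hs : UniqueDiffOn 𝕜 s) (P : 𝕜[X]) (n : ℕ)
    {x : 𝕜} (hx : x ∈ s) :
    iteratedDerivWithin n (fun x => P.eval x) s x = (derivative^[n] P).eval x := by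
  rw [iteratedDerivWithin_eq_iteratedDeriv hs (P.contDiff_eval n).contDiffAt hx,
    iteratedDeriv_eval]

theorem eq_zero_of_eval_iterate_derivative_eq_zero {R : Type*} [CommSemiring R]
    [IsAddTorsionFree R] {P : R[X]} {n : ℕ} {r : R} (hP : P.natDegree ≤ n)
    (h : ∀ k ≤ n, (derivative^[k] P).eval r = 0) : P = 0 := by
  refine P.eq_zero_of_hasseDeriv_eq_zero r fun k => ?_
  rcases le_or_gt k n with hk | hk
  · have := h k hk
    rw [← factorial_smul_hasseDeriv, LinearMap.smul_apply, eval_smul] at this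
    exact (nsmul_eq_zero_iff_right (Nat.factorial_ne_zero k)).1 this
  · rw [hasseDeriv_eq_zero_of_lt_natDegree P k (by omega), eval_zero]

end Polynomial

section LocalRepresentation

variable {𝕜 : Type*} [NontriviallyNormedField 𝕜] {s : Set 𝕜} {x : 𝕜} {n : ℕ}

theorem iteratedDerivWithin_add_eval_of_natDegree_lt (hs : UniqueDiffOn 𝕜 s) (hx : x ∈ s)
    {g : 𝕜 → 𝕜} (hg : ContDiffWithinAt 𝕜 n g s x) {P : 𝕜[X]} (hP : P.natDegree < n) :
    iteratedDerivWithin n (fun t => g t + P.eval t) s x = iteratedDerivWithin n g s x := by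
  rw [iteratedDerivWithin_fun_add hx hs hg (P.contDiff_eval n).contDiffWithinAt,
    iteratedDerivWithin_eval hs P n hx, iterate_derivative_eq_zero hP, eval_zero, add_zero]

theorem iteratedDerivWithin_linearCombination_add_eval (hs : UniqueDiffOn 𝕜 s) (hx : x ∈ s)
    {U V : 𝕜 → 𝕜} (hU : ContDiffWithinAt 𝕜 n U s x) (hV : ContDiffWithinAt 𝕜 n V s x)
    (a b : 𝕜) {P : 𝕜[X]} (hP : P.natDegree < n) :
    iteratedDerivWithin n (fun t => a * U t + b * V t + P.eval t) s x =
      a * iteratedDerivWithin n U s x + b * iteratedDerivWithin n V s x := by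
  rw [iteratedDerivWithin_add_eval_of_natDegree_lt (g := fun t => a * U t + b * V t) hs hx
      ((hU.const_smul a).add (hV.const_smul b)) hP,
    iteratedDerivWithin_fun_add (f := fun t => a * U t) (g := fun t => b * V t) hx hs
      (hU.const_smul a) (hV.const_smul b),
    iteratedDerivWithin_const_mul_field, iteratedDerivWithin_const_mul_field]

end LocalRepresentation

theorem eq_zero_of_chebyshev_of_two_zeros {X : Type*} {s : Set X} {u v : X → ℝ}
    (hcheb : ∀ a b : ℝ, (a, b) ≠ (0, 0) → {t ∈ s | a * u t + b * v t = 0}.Subsingleton)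
    {a b : ℝ} {x y : X} (hx : x ∈ s) (hy : y ∈ s) (hxy : x ≠ y)
    (hax : a * u x + b * v x = 0) (hay : a * u y + b * v y = 0) : a = 0 ∧ b = 0 := by
  by_contra hab
  exact hxy (hcheb a b (by simpa using hab) ⟨hx, hax⟩ ⟨hy, hay⟩)

/-- If the knot functions satisfy the Chebyshev property on `S = [α, β]` and all
derivatives of order `≤ q−1` of the local representation `f = a·U + b·V + P`
vanish at both endpoints, then the representation is identically zero. -/
theorem gb_local_rep_zero (q : ℕ) (hq : 2 ≤ q) (α β : ℝ) (hαβ : α < β)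
    (u v U V : ℝ → ℝ)
    (hU : ContDiffOn ℝ (q - 1) U (Set.Icc α β))
    (hV : ContDiffOn ℝ (q - 1) V (Set.Icc α β))
    (hUu : ∀ t ∈ Set.Icc α β, iteratedDerivWithin (q - 1) U (Set.Icc α β) t = u t)
    (hVv : ∀ t ∈ Set.Icc α β, iteratedDerivWithin (q - 1) V (Set.Icc α β) t = v t)
    (hcheb : ∀ a b : ℝ, (a, b) ≠ (0, 0) →
      Set.Subsingleton {t ∈ Set.Icc α β | a * u t + b * v t = 0})
    (a b : ℝ) (P : Polynomial ℝ) (hP : P.natDegree ≤ q - 2)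
    (f : ℝ → ℝ) (hf : ∀ t, f t = a * U t + b * V t + P.eval t)
    (hvanish : ∀ k ≤ q - 1,
      iteratedDerivWithin k f (Set.Icc α β) α = 0 ∧
      iteratedDerivWithin k f (Set.Icc α β) β = 0) :
    a = 0 ∧ b = 0 ∧ P = 0 := by
  have hS : UniqueDiffOn ℝ (Icc α β) := uniqueDiffOn_Icc hαβ
  have hα : α ∈ Icc α β := left_mem_Icc.2 hαβ.le
  have hβ : β ∈ Icc α β := right_mem_Icc.2 hαβ.le
  have hcast : ((q : WithTop ℕ∞) - 1) = ((q - 1 : ℕ) : WithTop ℕ∞) := by norm_cast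
  rw [hcast] at hU hV
  obtain rfl : f = _ := funext hf
  have htop : ∀ t ∈ Icc α β,
      iteratedDerivWithin (q - 1) (fun t => a * U t + b * V t + P.eval t) (Icc α β) t =
        a * u t + b * v t := fun t ht => by
    rw [iteratedDerivWithin_linearCombination_add_eval hS ht (hU t ht) (hV t ht) a b (by omega),
      hUu t ht, hVv t ht]
  obtain ⟨rfl, rfl⟩ := eq_zero_of_chebyshev_of_two_zeros hcheb hα hβ hαβ.ne
    (htop α hα ▸ (hvanish _ le_rfl).1) (htop β hβ ▸ (hvanish _ le_rfl).2)
  refine ⟨rfl, rfl, eq_zero_of_eval_iterate_derivative_eq_zero (n := q - 1) (r := α) (by omega)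
    fun k hk => ?_⟩
  rw [← iteratedDerivWithin_eval hS P k hα]
  simpa using (hvanish k hk).1
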